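/- For every stopping time v ∈ 𝒯 and all s, s' ∈ [0,∞], one has |ess inf_{σ∈𝒯_v} E[U(s,σ) | 𝓕_v] − ess inf_{σ∈𝒯_v} E[U(s',σ) | 𝓕_v]| ≤ r(|s − s'|) almost surely; in particular, with t_n ↘ t and |t_n − t| < 1/n, setting X_v(s) := ess inf_{σ∈𝒯_v} E[U(s,σ)|𝓕_v], one has limsup_n |X_{t_n}(t_n) − X_{t_n}(t)| = 0. -/

import Mathlib

/-!
Common setup for "On the non-zero-sum stopping game ending at the maximum of the stopping
strategies".  Time is indexed by `[0,∞] = ℝ≥0∞`.  Since `Ω` is at most countable and `ℙ`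
charges every point, essential suprema/infima over families of stopping times coincide with
the pointwise ones, which is how they are formalized below.
-/

open MeasureTheory Filter Set
open scoped ENNReal Topology

noncomputable section

namespace StoppingGames

variable {Ω : Type*} [mΩ : MeasurableSpace Ω]

/-- `|a - b|` on `[0,∞]`, via truncated subtraction. -/
def dd (a b : ℝ≥0∞) : ℝ≥0∞ := (a - b) + (b - a)

/-- `𝒯`, the set of stopping times with values in `[0,∞]`. -/
def ST (𝓕 : Filtration ℝ≥0∞ mΩ) : Set (Ω → ℝ≥0∞) := {τ | IsStoppingTime 𝓕 (fun ω => (τ ω : WithTop ℝ≥0∞))}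

/-- `𝒯_σ`, the stopping times no less than `σ`. -/
def STge (𝓕 : Filtration ℝ≥0∞ mΩ) (σ : Ω → ℝ≥0∞) : Set (Ω → ℝ≥0∞) :=
  {τ | IsStoppingTime 𝓕 (fun ω => (τ ω : WithTop ℝ≥0∞)) ∧ ∀ ω, σ ω ≤ τ ω}

/-- `𝒯_{t+}`, the stopping times strictly greater than `t`. -/
def STgt (𝓕 : Filtration ℝ≥0∞ mΩ) (t : ℝ≥0∞) : Set (Ω → ℝ≥0∞) :=
  {τ | IsStoppingTime 𝓕 (fun ω => (τ ω : WithTop ℝ≥0∞)) ∧ ∀ ω, t < τ ω}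

/-- The class `𝕋` of jointly measurable maps `φ : [0,∞] × Ω → [0,∞]` with
`φ(t,·) ∈ 𝒯_{t+}` for every finite `t`. -/
def IsTT (𝓕 : Filtration ℝ≥0∞ mΩ) (φ : ℝ≥0∞ → Ω → ℝ≥0∞) : Prop :=
  Measurable (Function.uncurry φ) ∧ ∀ t : ℝ≥0∞, t ≠ ∞ → φ t ∈ STgt 𝓕 t

/-- A stopping strategy `ρ = (ρ₀, ρ₁) ∈ 𝔗`. -/
def IsStrategy (𝓕 : Filtration ℝ≥0∞ mΩ) (ρ : (Ω → ℝ≥0∞) × (ℝ≥0∞ → Ω → ℝ≥0∞)) : Prop :=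
  IsStoppingTime 𝓕 (fun ω => (ρ.1 ω : WithTop ℝ≥0∞)) ∧ IsTT 𝓕 ρ.2

/-- `𝔗_σ`, the stopping strategies whose first component is `≥ σ`. -/
def IsStrategyGe (𝓕 : Filtration ℝ≥0∞ mΩ) (σ : Ω → ℝ≥0∞)
    (ρ : (Ω → ℝ≥0∞) × (ℝ≥0∞ → Ω → ℝ≥0∞)) : Prop :=
  IsStrategy 𝓕 ρ ∧ ∀ ω, σ ω ≤ ρ.1 ω

/-- `ρ[τ] = ρ₀ 1_{ρ₀ ≤ τ₀} + ρ₁(τ₀) 1_{ρ₀ > τ₀}`. -/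
def play (ρ τ : (Ω → ℝ≥0∞) × (ℝ≥0∞ → Ω → ℝ≥0∞)) : Ω → ℝ≥0∞ := fun ω =>
  if ρ.1 ω ≤ τ.1 ω then ρ.1 ω else ρ.2 (τ.1 ω) ω

/-- `u(ρ,τ) = E[U(ρ[τ], τ[ρ])]`. -/
def payoff (μ : Measure Ω) (U : ℝ≥0∞ → ℝ≥0∞ → Ω → ℝ)
    (ρ τ : (Ω → ℝ≥0∞) × (ℝ≥0∞ → Ω → ℝ≥0∞)) : ℝ :=
  ∫ ω, U (play ρ τ ω) (play τ ρ ω) ω ∂μ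

/-- `u_σ(ρ,τ) = E[U(ρ[τ], τ[ρ]) | m]`. -/
def condPayoff (μ : Measure Ω) (m : MeasurableSpace Ω) (U : ℝ≥0∞ → ℝ≥0∞ → Ω → ℝ)
    (ρ τ : (Ω → ℝ≥0∞) × (ℝ≥0∞ → Ω → ℝ≥0∞)) : Ω → ℝ :=
  μ[fun ω => U (play ρ τ ω) (play τ ρ ω) ω | m]

/-- The grid point `n·h ∈ [0,∞]`. -/
def grid (h : ℝ) (n : ℕ) : ℝ≥0∞ := ENNReal.ofReal (n * h)

/-- `⌊t/h⌋ + 1`. -/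
def gridIdx (h : ℝ) (t : ℝ≥0∞) : ℕ := ⌊t.toReal / h⌋₊ + 1

/-- `ρ_h(t) := ρ̄((⌊t/h⌋+1)h)` for finite `t`, and `ρ_h(∞) := ∞`. -/
def gridStrat (h : ℝ) (bar : ℕ → Ω → ℝ≥0∞) : ℝ≥0∞ → Ω → ℝ≥0∞ := fun t ω =>
  if t = ∞ then ∞ else bar (gridIdx h t) ω

/-- Evaluation `φ(σ) : ω ↦ φ(σ(ω), ω)` of a time-indexed family along a random time. -/
def evalAt (φ : ℝ≥0∞ → Ω → ℝ≥0∞) (σ : Ω → ℝ≥0∞) : Ω → ℝ≥0∞ := fun ω => φ (σ ω) ω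

/-- `X_t = ess inf_{σ ∈ 𝒯_t} E[U(t,σ) | 𝓕_t]` (pointwise infimum, which coincides with the
essential one since `Ω` is countable and every point is charged). -/
def X1v (μ : Measure Ω) (𝓕 : Filtration ℝ≥0∞ mΩ) (U : ℝ≥0∞ → ℝ≥0∞ → Ω → ℝ)
    (t : ℝ≥0∞) (ω : Ω) : ℝ :=
  ⨅ σ : STge 𝓕 (fun _ => t), (μ[fun ω' => U t (σ.1 ω') ω' | 𝓕 t]) ω

/-- `Y_t = ess sup_{σ ∈ 𝒯_t} E[U(σ,t) | 𝓕_t]`. -/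
def Y1v (μ : Measure Ω) (𝓕 : Filtration ℝ≥0∞ mΩ) (U : ℝ≥0∞ → ℝ≥0∞ → Ω → ℝ)
    (t : ℝ≥0∞) (ω : Ω) : ℝ :=
  ⨆ σ : STge 𝓕 (fun _ => t), (μ[fun ω' => U (σ.1 ω') t ω' | 𝓕 t]) ω

/-- Player 2: `X²_t = ess sup_{σ ∈ 𝒯_t} E[U²(t,σ) | 𝓕_t]`. -/
def X2v (μ : Measure Ω) (𝓕 : Filtration ℝ≥0∞ mΩ) (U : ℝ≥0∞ → ℝ≥0∞ → Ω → ℝ)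
    (t : ℝ≥0∞) (ω : Ω) : ℝ :=
  ⨆ σ : STge 𝓕 (fun _ => t), (μ[fun ω' => U t (σ.1 ω') ω' | 𝓕 t]) ω

/-- Player 2: `Y²_t = ess inf_{σ ∈ 𝒯_t} E[U²(σ,t) | 𝓕_t]`. -/
def Y2v (μ : Measure Ω) (𝓕 : Filtration ℝ≥0∞ mΩ) (U : ℝ≥0∞ → ℝ≥0∞ → Ω → ℝ)
    (t : ℝ≥0∞) (ω : Ω) : ℝ :=
  ⨅ σ : STge 𝓕 (fun _ => t), (μ[fun ω' => U (σ.1 ω') t ω' | 𝓕 t]) ω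

/-- `Z_t = U(t,t)`. -/
def Zv (U : ℝ≥0∞ → ℝ≥0∞ → Ω → ℝ) : ℝ≥0∞ → Ω → ℝ := fun t ω => U t t ω

/-- `X_{ρ₀} 1_{ρ₀ < τ₀} + Y_{τ₀} 1_{ρ₀ > τ₀} + Z_{ρ₀} 1_{ρ₀ = τ₀}`. -/
def dynkinKernel (X Y Z : ℝ≥0∞ → Ω → ℝ) (ρ₀ τ₀ : Ω → ℝ≥0∞) (ω : Ω) : ℝ :=
  if ρ₀ ω < τ₀ ω then X (ρ₀ ω) ω else if τ₀ ω < ρ₀ ω then Y (τ₀ ω) ω else Z (ρ₀ ω) ω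

/-- The Dynkin-game payoff `V(ρ₀,τ₀)`. -/
def dynkinV (μ : Measure Ω) (X Y Z : ℝ≥0∞ → Ω → ℝ) (ρ₀ τ₀ : Ω → ℝ≥0∞) : ℝ :=
  ∫ ω, dynkinKernel X Y Z ρ₀ τ₀ ω ∂μ

/-- The conditional Dynkin-game payoff. -/
def condDynkin (μ : Measure Ω) (m : MeasurableSpace Ω) (X Y Z : ℝ≥0∞ → Ω → ℝ)
    (ρ₀ τ₀ : Ω → ℝ≥0∞) : Ω → ℝ :=
  μ[fun ω => dynkinKernel X Y Z ρ₀ τ₀ ω | m]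

/-- `v_t¹`, the (sup-inf) value of the conditional Dynkin game `G_t¹` with payoffs
`(X¹, Y¹, Z¹)` built from `U¹`. -/
def v1v (μ : Measure Ω) (𝓕 : Filtration ℝ≥0∞ mΩ) (U : ℝ≥0∞ → ℝ≥0∞ → Ω → ℝ)
    (t : ℝ≥0∞) (ω : Ω) : ℝ :=
  ⨆ ρ₀ : STge 𝓕 (fun _ => t), ⨅ τ₀ : STge 𝓕 (fun _ => t),
    condDynkin μ (𝓕 t) (X1v μ 𝓕 U) (Y1v μ 𝓕 U) (Zv U) ρ₀.1 τ₀.1 ω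

/-- `v_t²`, the (inf-sup) value of the conditional Dynkin game `G_t²` with payoffs
`(X², Y², Z²)` built from `U²`. -/
def v2v (μ : Measure Ω) (𝓕 : Filtration ℝ≥0∞ mΩ) (U : ℝ≥0∞ → ℝ≥0∞ → Ω → ℝ)
    (t : ℝ≥0∞) (ω : Ω) : ℝ :=
  ⨅ ρ₀ : STge 𝓕 (fun _ => t), ⨆ τ₀ : STge 𝓕 (fun _ => t),
    condDynkin μ (𝓕 t) (X2v μ 𝓕 U) (Y2v μ 𝓕 U) (Zv U) ρ₀.1 τ₀.1 ω

/-- `W_t¹ = E[U¹(t, τ_h²(t)) | 𝓕_t]`. -/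
def W1v (μ : Measure Ω) (𝓕 : Filtration ℝ≥0∞ mΩ) (U : ℝ≥0∞ → ℝ≥0∞ → Ω → ℝ)
    (h : ℝ) (bar : ℕ → Ω → ℝ≥0∞) (t : ℝ≥0∞) (ω : Ω) : ℝ :=
  (μ[fun ω' => U t (gridStrat h bar t ω') ω' | 𝓕 t]) ω

/-- `W_t² = E[U²(ρ_h¹(t), t) | 𝓕_t]`. -/
def W2v (μ : Measure Ω) (𝓕 : Filtration ℝ≥0∞ mΩ) (U : ℝ≥0∞ → ℝ≥0∞ → Ω → ℝ)
    (h : ℝ) (bar : ℕ → Ω → ℝ≥0∞) (t : ℝ≥0∞) (ω : Ω) : ℝ :=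
  (μ[fun ω' => U (gridStrat h bar t ω') t ω' | 𝓕 t]) ω

/-- `μ₁ = inf {t ≥ 0 : v_t¹ ≤ W_t¹ + ε}`. -/
def mu1T (μ : Measure Ω) (𝓕 : Filtration ℝ≥0∞ mΩ) (U : ℝ≥0∞ → ℝ≥0∞ → Ω → ℝ)
    (h ε : ℝ) (bar : ℕ → Ω → ℝ≥0∞) : Ω → ℝ≥0∞ := fun ω =>
  sInf {t | v1v μ 𝓕 U t ω ≤ W1v μ 𝓕 U h bar t ω + ε}

/-- `μ₂ = inf {t ≥ 0 : v_t² ≤ W_t² + ε}`. -/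
def mu2T (μ : Measure Ω) (𝓕 : Filtration ℝ≥0∞ mΩ) (U : ℝ≥0∞ → ℝ≥0∞ → Ω → ℝ)
    (h ε : ℝ) (bar : ℕ → Ω → ℝ≥0∞) : Ω → ℝ≥0∞ := fun ω =>
  sInf {t | v2v μ 𝓕 U t ω ≤ W2v μ 𝓕 U h bar t ω + ε}

/-- `ρ̄(nh)` is a family of `ε`-optimizers for `Y¹_{nh}`:
`E[U(ρ̄(nh), nh) | 𝓕_{nh}] ≥ Y_{nh} − ε`. -/
def IsOptRho1 (μ : Measure Ω) (𝓕 : Filtration ℝ≥0∞ mΩ) (U : ℝ≥0∞ → ℝ≥0∞ → Ω → ℝ)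
    (ε h : ℝ) (bar : ℕ → Ω → ℝ≥0∞) : Prop :=
  ∀ n : ℕ, bar n ∈ STge 𝓕 (fun _ => grid h n) ∧
    ∀ᵐ ω ∂μ, Y1v μ 𝓕 U (grid h n) ω - ε ≤
      (μ[fun ω' => U (bar n ω') (grid h n) ω' | 𝓕 (grid h n)]) ω

/-- `τ̄(nh)` is a family of `ε`-optimizers for `X¹_{nh}`:
`E[U(nh, τ̄(nh)) | 𝓕_{nh}] ≤ X_{nh} + ε`. -/
def IsOptTau1 (μ : Measure Ω) (𝓕 : Filtration ℝ≥0∞ mΩ) (U : ℝ≥0∞ → ℝ≥0∞ → Ω → ℝ)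
    (ε h : ℝ) (bar : ℕ → Ω → ℝ≥0∞) : Prop :=
  ∀ n : ℕ, bar n ∈ STge 𝓕 (fun _ => grid h n) ∧
    ∀ᵐ ω ∂μ, (μ[fun ω' => U (grid h n) (bar n ω') ω' | 𝓕 (grid h n)]) ω ≤
      X1v μ 𝓕 U (grid h n) ω + ε

/-- `ρ̄²(nh)` is a family of `ε`-optimizers for `Y²_{nh}` (an essential infimum). -/
def IsOptRho2 (μ : Measure Ω) (𝓕 : Filtration ℝ≥0∞ mΩ) (U : ℝ≥0∞ → ℝ≥0∞ → Ω → ℝ)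
    (ε h : ℝ) (bar : ℕ → Ω → ℝ≥0∞) : Prop :=
  ∀ n : ℕ, bar n ∈ STge 𝓕 (fun _ => grid h n) ∧
    ∀ᵐ ω ∂μ, (μ[fun ω' => U (bar n ω') (grid h n) ω' | 𝓕 (grid h n)]) ω ≤
      Y2v μ 𝓕 U (grid h n) ω + ε

/-- `τ̄²(nh)` is a family of `ε`-optimizers for `X²_{nh}` (an essential supremum). -/
def IsOptTau2 (μ : Measure Ω) (𝓕 : Filtration ℝ≥0∞ mΩ) (U : ℝ≥0∞ → ℝ≥0∞ → Ω → ℝ)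
    (ε h : ℝ) (bar : ℕ → Ω → ℝ≥0∞) : Prop :=
  ∀ n : ℕ, bar n ∈ STge 𝓕 (fun _ => grid h n) ∧
    ∀ᵐ ω ∂μ, X2v μ 𝓕 U (grid h n) ω - ε ≤
      (μ[fun ω' => U (grid h n) (bar n ω') ω' | 𝓕 (grid h n)]) ω

/-- The standing assumptions on the filtered probability space: `ℙ` charges every point of the
(countable) `Ω`, the filtration is right continuous (usual conditions; completeness is automatic
since null sets are empty), and `𝓕 = 𝓕_∞ = ⋃_{t<∞} 𝓕_t`. -/
def UsualSetup (μ : Measure Ω) (𝓕 : Filtration ℝ≥0∞ mΩ) : Prop :=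
  (∀ ω : Ω, μ {ω} ≠ 0) ∧
  (∀ t : ℝ≥0∞, (𝓕 t : MeasurableSpace Ω) = ⨅ s ∈ Ioi t, (𝓕 s : MeasurableSpace Ω)) ∧
  ((𝓕 ∞ : MeasurableSpace Ω) = mΩ) ∧
  ((⨆ t ∈ Iio (∞ : ℝ≥0∞), (𝓕 t : MeasurableSpace Ω)) = mΩ)

/-- The standing assumptions on a payoff `U`: boundedness, `𝓕_{s∨t}`-measurability of `U(s,t)`,
and the uniform-continuity modulus `r` (bounded, nondecreasing, `r(0+) = r(0) = 0`).  Note that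
the modulus condition, being imposed on all of `[0,∞]`, encodes that the values at `∞` are the
corresponding limits. -/
def PayoffAssumption (𝓕 : Filtration ℝ≥0∞ mΩ) (U : ℝ≥0∞ → ℝ≥0∞ → Ω → ℝ)
    (r : ℝ≥0∞ → ℝ) : Prop :=
  (∃ M : ℝ, ∀ s t ω, |U s t ω| ≤ M) ∧
  (∀ s t : ℝ≥0∞, Measurable[𝓕 (s ⊔ t)] (U s t)) ∧
  Monotone r ∧ (∀ x, 0 ≤ r x) ∧ (∃ C : ℝ, ∀ x, r x ≤ C) ∧ r 0 = 0 ∧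
  Tendsto r (𝓝[>] (0 : ℝ≥0∞)) (𝓝 (0 : ℝ)) ∧
  (∀ s t s' t' : ℝ≥0∞, ∀ ω, |U s t ω - U s' t' ω| ≤ r (dd s s' + dd t t'))

/-- The values of `U` at `∞` are the limits of the values at finite times. -/
def LimitsAtInfty (U : ℝ≥0∞ → ℝ≥0∞ → Ω → ℝ) : Prop :=
  (∀ s ω, Tendsto (fun b => U s b ω) (𝓝[<] (∞ : ℝ≥0∞)) (𝓝 (U s ∞ ω))) ∧
  (∀ t ω, Tendsto (fun a => U a t ω) (𝓝[<] (∞ : ℝ≥0∞)) (𝓝 (U ∞ t ω))) ∧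
  (∀ ω, Tendsto (fun p : ℝ≥0∞ × ℝ≥0∞ => U p.1 p.2 ω)
    ((𝓝[<] (∞ : ℝ≥0∞)) ×ˢ (𝓝[<] (∞ : ℝ≥0∞))) (𝓝 (U ∞ ∞ ω)))

/-- `ess inf_{σ ∈ 𝒯_v} E[U(s,σ) | 𝓕_v]` for a stopping time `v`. -/
def XatST (μ : Measure Ω) (𝓕 : Filtration ℝ≥0∞ mΩ) (U : ℝ≥0∞ → ℝ≥0∞ → Ω → ℝ)
    {v : Ω → ℝ≥0∞} (hv : IsStoppingTime 𝓕 (fun ω => (v ω : WithTop ℝ≥0∞))) (s : ℝ≥0∞) (ω : Ω) : ℝ :=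
  ⨅ σ : STge 𝓕 v, (μ[fun ω' => U s (σ.1 ω') ω' | hv.measurableSpace]) ω

/-- `X̃_v(s) = ess inf_{σ ∈ 𝒯_v} E[U(s,σ) | 𝓕_v]` for a deterministic time `v`. -/
def Xat (μ : Measure Ω) (𝓕 : Filtration ℝ≥0∞ mΩ) (U : ℝ≥0∞ → ℝ≥0∞ → Ω → ℝ)
    (v s : ℝ≥0∞) (ω : Ω) : ℝ :=
  ⨅ σ : STge 𝓕 (fun _ => v), (μ[fun ω' => U s (σ.1 ω') ω' | 𝓕 v]) ω

/-- `ρ₀* = μ₁ 1_{μ₁ ≤ μ₂} + ρ²_{μ₂+δ} 1_{μ₁ > μ₂}`. -/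
def rhoStar0 (m1 m2 rsad2 : Ω → ℝ≥0∞) : Ω → ℝ≥0∞ := fun ω =>
  if m1 ω ≤ m2 ω then m1 ω else rsad2 ω

/-- `ρ₁*(t) = ρ_h²(t)` if `t ≥ μ₁ ∧ μ₂ + δ` and `μ₁ > μ₂`, else `ρ_h¹(t)`. -/
def rhoStar1 (m1 m2 : Ω → ℝ≥0∞) (δ : ℝ) (φ1 φ2 : ℝ≥0∞ → Ω → ℝ≥0∞) :
    ℝ≥0∞ → Ω → ℝ≥0∞ := fun t ω =>
  if (m1 ω ⊓ m2 ω) + ENNReal.ofReal δ ≤ t ∧ m2 ω < m1 ω then φ2 t ω else φ1 t ω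

/-- `τ₀* = τ¹_{μ₁+δ} 1_{μ₁ ≤ μ₂} + μ₂ 1_{μ₁ > μ₂}`. -/
def tauStar0 (m1 m2 tsad1 : Ω → ℝ≥0∞) : Ω → ℝ≥0∞ := fun ω =>
  if m1 ω ≤ m2 ω then tsad1 ω else m2 ω

/-- `τ₁*(t) = τ_h¹(t)` if `t ≥ μ₁ ∧ μ₂ + δ` and `μ₁ ≤ μ₂`, else `τ_h²(t)`. -/
def tauStar1 (m1 m2 : Ω → ℝ≥0∞) (δ : ℝ) (ψ1 ψ2 : ℝ≥0∞ → Ω → ℝ≥0∞) :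
    ℝ≥0∞ → Ω → ℝ≥0∞ := fun t ω =>
  if (m1 ω ⊓ m2 ω) + ENNReal.ofReal δ ≤ t ∧ m1 ω ≤ m2 ω then ψ1 t ω else ψ2 t ω

/-!
For a fixed `σ`, the payoffs `U(s,σ)` and `U(s',σ)` differ by at most `r(|s − s'|)` pointwise,
hence so do their conditional expectations, almost surely. Since every point of `Ω` is charged,
these almost sure bounds hold everywhere, so they pass through the (uncountable) infimum over
`σ ∈ 𝒯_v`, an infimum being `1`-Lipschitz for the sup distance. The second claim is the case
`v = t_n`, `s = t_n`, `s' = t`, together with `r(1/n) → 0`.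
-/

theorem forall_of_ae_of_measure_singleton_ne_zero {μ : Measure Ω} (hμ : ∀ ω, μ {ω} ≠ 0)
    {p : Ω → Prop} (h : ∀ᵐ ω ∂μ, p ω) (ω : Ω) : p ω := by
  by_contra hω
  exact hμ ω (measure_mono_null (by simpa using hω) h)

theorem measurable_apply_of_countable [Countable Ω] {α β : Type*} [MeasurableSpace α]
    [MeasurableSingletonClass α] [MeasurableSpace β] {σ : Ω → α} (hσ : Measurable σ)
    {F : α → Ω → β} (hF : ∀ a, Measurable (F a)) : Measurable fun ω => F (σ ω) ω := by
  intro B hB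
  have hpre : (fun ω => F (σ ω) ω) ⁻¹' B = ⋃ a ∈ range σ, σ ⁻¹' {a} ∩ F a ⁻¹' B := by
    ext ω
    simp only [mem_preimage, mem_iUnion, mem_inter_iff, mem_singleton_iff, mem_range]
    exact ⟨fun h => ⟨σ ω, ⟨ω, rfl⟩, rfl, h⟩, by rintro ⟨a, _, rfl, h⟩; exact h⟩
  rw [hpre]
  exact .biUnion (countable_range σ) fun a _ => (hσ (measurableSet_singleton a)).inter (hF a hB)

theorem ae_abs_condExp_sub_condExp_le {μ : Measure Ω} {m : MeasurableSpace Ω} {f g : Ω → ℝ}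
    (hf : Integrable f μ) (hg : Integrable g μ) {c : ℝ} (h : ∀ᵐ ω ∂μ, |f ω - g ω| ≤ c) :
    ∀ᵐ ω ∂μ, |μ[f | m] ω - μ[g | m] ω| ≤ c := by
  filter_upwards [condExp_sub hf hg m, ae_bdd_abs_condExp_of_ae_bdd_abs (m := m) (f := f - g) h]
    with ω hsub hbdd
  rwa [hsub] at hbdd

theorem ciInf_le_ciInf_add {ι : Sort*} [Nonempty ι] {f g : ι → ℝ} (hf : BddBelow (range f))
    {c : ℝ} (h : ∀ i, f i ≤ g i + c) : ⨅ i, f i ≤ (⨅ i, g i) + c :=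
  sub_le_iff_le_add.mp <| le_ciInf fun i => sub_le_iff_le_add.mpr <| (ciInf_le hf i).trans (h i)

theorem abs_ciInf_sub_ciInf_le {ι : Sort*} [Nonempty ι] {f g : ι → ℝ} {c : ℝ}
    (h : ∀ i, |f i - g i| ≤ c) : |(⨅ i, f i) - ⨅ i, g i| ≤ c := by
  have hfg (i : ι) : f i ≤ g i + c := by linarith [(abs_le.mp (h i)).2]
  have hgf (i : ι) : g i ≤ f i + c := by linarith [(abs_le.mp (h i)).1]
  by_cases hf : BddBelow (range f)
  · have hg : BddBelow (range g) := by
      obtain ⟨b, hb⟩ := hf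
      exact ⟨b - c, forall_mem_range.mpr fun i => by linarith [hb (mem_range_self i), hfg i]⟩
    exact abs_sub_le_iff.mpr ⟨by linarith [ciInf_le_ciInf_add hf hfg],
      by linarith [ciInf_le_ciInf_add hg hgf]⟩
  · have hg : ¬BddBelow (range g) := by
      rintro ⟨b, hb⟩
      exact hf ⟨b - c, forall_mem_range.mpr fun i => by linarith [hb (mem_range_self i), hgf i]⟩
    obtain ⟨i⟩ := ‹Nonempty ι›
    rw [Real.iInf_of_not_bddBelow hf, Real.iInf_of_not_bddBelow hg, sub_zero, abs_zero]
    exact (abs_nonneg _).trans (h i)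

@[simp]
theorem dd_self (a : ℝ≥0∞) : dd a a = 0 := by
  simp [dd]

theorem tendsto_one_div_natCast_nhdsGT_zero :
    Tendsto (fun n : ℕ => 1 / (n : ℝ≥0∞)) atTop (𝓝[>] 0) := by
  refine tendsto_nhdsWithin_of_tendsto_nhds_of_eventually_within _
    (by simpa only [one_div] using ENNReal.tendsto_inv_nat_nhds_zero) (.of_forall fun n => ?_)
  simp [pos_iff_ne_zero]

namespace PayoffAssumption

variable {𝓕 : Filtration ℝ≥0∞ mΩ} {U : ℝ≥0∞ → ℝ≥0∞ → Ω → ℝ} {r : ℝ≥0∞ → ℝ}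

theorem abs_sub_le_left (hU : PayoffAssumption 𝓕 U r) (s s' t : ℝ≥0∞) (ω : Ω) :
    |U s t ω - U s' t ω| ≤ r (dd s s') := by
  obtain ⟨-, -, -, -, -, -, -, hmod⟩ := hU
  simpa using hmod s t s' t ω

theorem integrable_comp_stoppingTime [Countable Ω] {μ : Measure Ω} [IsFiniteMeasure μ]
    (hU : PayoffAssumption 𝓕 U r) {σ : Ω → ℝ≥0∞}
    (hσ : IsStoppingTime 𝓕 (fun ω => (σ ω : WithTop ℝ≥0∞))) (s : ℝ≥0∞) :
    Integrable (fun ω => U s (σ ω) ω) μ := by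
  obtain ⟨⟨M, hM⟩, hmeas, -⟩ := hU
  have hσm : Measurable σ := by simpa using hσ.measurable'.untopD 0
  refine .of_bound ?_ M (ae_of_all _ fun ω => hM s (σ ω) ω)
  exact (measurable_apply_of_countable hσm fun t => (hmeas s t).mono (𝓕.le _) le_rfl)
    |>.aestronglyMeasurable

end PayoffAssumption

theorem abs_XatST_sub_le [Countable Ω] {μ : Measure Ω} [IsFiniteMeasure μ]
    (hμ : ∀ ω, μ {ω} ≠ 0) {𝓕 : Filtration ℝ≥0∞ mΩ} {U : ℝ≥0∞ → ℝ≥0∞ → Ω → ℝ}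
    {r : ℝ≥0∞ → ℝ} (hU : PayoffAssumption 𝓕 U r) {v : Ω → ℝ≥0∞}
    (hv : IsStoppingTime 𝓕 (fun ω => (v ω : WithTop ℝ≥0∞))) (s s' : ℝ≥0∞) (ω : Ω) :
    |XatST μ 𝓕 U hv s ω - XatST μ 𝓕 U hv s' ω| ≤ r (dd s s') := by
  have : Nonempty (STge 𝓕 v) := ⟨⟨v, hv, fun _ => le_rfl⟩⟩
  exact abs_ciInf_sub_ciInf_le fun σ => forall_of_ae_of_measure_singleton_ne_zero hμ
    (ae_abs_condExp_sub_condExp_le (hU.integrable_comp_stoppingTime σ.2.1 s)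
      (hU.integrable_comp_stoppingTime σ.2.1 s')
      (ae_of_all _ fun ω => hU.abs_sub_le_left s s' (σ.1 ω) ω)) ω

theorem Xat_eq_XatST_const (μ : Measure Ω) (𝓕 : Filtration ℝ≥0∞ mΩ)
    (U : ℝ≥0∞ → ℝ≥0∞ → Ω → ℝ) (v : ℝ≥0∞) :
    Xat μ 𝓕 U v = XatST μ 𝓕 U (isStoppingTime_const 𝓕 v) := by
  ext s ω
  simp only [Xat, XatST, IsStoppingTime.measurableSpace_const]

/-- a step in the proof of Lemma 3.1: for every stopping time `v` and all
`s, s' ∈ [0,∞]`, `|ess inf_{σ∈𝒯_v} E[U(s,σ)|𝓕_v] − ess inf_{σ∈𝒯_v} E[U(s',σ)|𝓕_v]| ≤ r(|s−s'|)`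
a.s.; in particular, for `t_n ↘ t` with `|t_n − t| < 1/n`, setting
`X_v(s) := ess inf_{σ∈𝒯_v} E[U(s,σ)|𝓕_v]`, one has `limsup_n |X_{t_n}(t_n) − X_{t_n}(t)| = 0`. -/
theorem Xat_modulus [Countable Ω] (μ : Measure Ω) [IsProbabilityMeasure μ]
    (𝓕 : Filtration ℝ≥0∞ mΩ) (hsetup : UsualSetup μ 𝓕)
    (U : ℝ≥0∞ → ℝ≥0∞ → Ω → ℝ) (r : ℝ≥0∞ → ℝ) (hU : PayoffAssumption 𝓕 U r) :
    (∀ (v : Ω → ℝ≥0∞) (hv : IsStoppingTime 𝓕 (fun ω => (v ω : WithTop ℝ≥0∞))) (s s' : ℝ≥0∞),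
      ∀ᵐ ω ∂μ, |XatST μ 𝓕 U hv s ω - XatST μ 𝓕 U hv s' ω| ≤ r (dd s s')) ∧
    (∀ (t : ℝ≥0∞) (tseq : ℕ → ℝ≥0∞), Antitone tseq → (∀ n, t ≤ tseq n) →
      Tendsto tseq atTop (𝓝 t) → (∀ n : ℕ, dd (tseq n) t < 1 / (n : ℝ≥0∞)) →
      ∀ᵐ ω ∂μ,
        Filter.limsup
          (fun n => |Xat μ 𝓕 U (tseq n) (tseq n) ω - Xat μ 𝓕 U (tseq n) t ω|) atTop = 0) := by
  refine ⟨fun v hv s s' => ae_of_all _ (abs_XatST_sub_le hsetup.1 hU hv s s'), ?_⟩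
  intro t tseq _ _ _ hdd
  have hbound (n : ℕ) (ω : Ω) :
      |Xat μ 𝓕 U (tseq n) (tseq n) ω - Xat μ 𝓕 U (tseq n) t ω| ≤ r (dd (tseq n) t) := by
    rw [Xat_eq_XatST_const]
    exact abs_XatST_sub_le hsetup.1 hU _ _ _ ω
  obtain ⟨-, -, hr_mono, -, -, -, hr_zero, -⟩ := hU
  exact ae_of_all _ fun ω => Tendsto.limsup_eq <| squeeze_zero (fun n => abs_nonneg _)
    (fun n => (hbound n ω).trans (hr_mono (hdd n).le))
    (hr_zero.comp tendsto_one_div_natCast_nhdsGT_zero)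

end StoppingGames
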